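/- The Hoover index of the negative binomial distribution is decreasing in k: let m > 0 and 0 < k₁ < k₂. Then (1/(2m)) · ∑_{x∈ℕ} |x − m| · f(x;k₂,m) ≤ (1/(2m)) · ∑_{x∈ℕ} |x − m| · f(x;k₁,m). -/

import Mathlib

/-- Probability mass function of the negative binomial distribution with
shape `k > 0` and mean `m > 0`. -/
noncomputable def nbPmf (k m : ℝ) (x : ℕ) : ℝ :=
  Real.Gamma (k + x) / (Real.Gamma k * (Nat.factorial x : ℝ)) *
    (k / (k + m)) ^ (k : ℝ) * (m / (k + m)) ^ x

lemma nbPmf_pos {k m : ℝ} (hk : 0 < k) (hm : 0 < m) (x : ℕ) : 0 < nbPmf k m x := by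
  have h1 : 0 < Real.Gamma (k + x) := Real.Gamma_pos_of_pos (by positivity)
  have h2 : 0 < Real.Gamma k := Real.Gamma_pos_of_pos hk
  have h3 : (0:ℝ) < Nat.factorial x := by exact_mod_cast Nat.factorial_pos x
  have h4 : 0 < k / (k + m) := by positivity
  have h5 : 0 < m / (k + m) := by positivity
  unfold nbPmf
  positivity

lemma nbPmf_succ {k m : ℝ} (hk : 0 < k) (hm : 0 < m) (x : ℕ) :
    nbPmf k m (x + 1) = (m / (k + m)) * ((k + x) / (x + 1)) * nbPmf k m x := by
  have hkx : k + (x:ℝ) ≠ 0 := by positivity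
  unfold nbPmf
  have : k + ((x:ℕ) + 1 : ℕ) = (k + x) + 1 := by push_cast; ring
  rw [this, Real.Gamma_add_one hkx, Nat.factorial_succ, pow_succ]
  have h2 : 0 < Real.Gamma k := Real.Gamma_pos_of_pos hk
  have h3 : (0:ℝ) < Nat.factorial x := by exact_mod_cast Nat.factorial_pos x
  push_cast
  field_simp

lemma nb_partial_sum {k m : ℝ} (hk : 0 < k) (hm : 0 < m) (N : ℕ) :
    ∑ x ∈ Finset.range N, (m - x) * nbPmf k m x
      = ((k + m) / k) * N * nbPmf k m N := by
  induction N with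
  | zero => simp
  | succ N ih =>
    rw [Finset.sum_range_succ, ih, nbPmf_succ hk hm N]
    have hkm : (0:ℝ) < k + m := by positivity
    have hN1 : (0:ℝ) < (N:ℝ) + 1 := by positivity
    push_cast
    field_simp
    ring

lemma nb_tail_tendsto {k m : ℝ} (hk : 0 < k) (hm : 0 < m) :
    Filter.Tendsto (fun N : ℕ => ((k + m) / k) * N * nbPmf k m N)
      Filter.atTop (nhds 0) := by
  have hkm : (0:ℝ) < k + m := by positivity
  set a : ℕ → ℝ := fun N => ((k + m) / k) * N * nbPmf k m N with ha
  have hsumm : Summable a := by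
    apply summable_of_ratio_test_tendsto_lt_one
      (l := m / (k + m)) ((div_lt_one hkm).2 (by linarith))
    · filter_upwards [Filter.eventually_ge_atTop 1] with N hN
      have := nbPmf_pos hk hm N
      have hN0 : (0:ℝ) < (N:ℝ) := by exact_mod_cast hN
      simp only [ha]
      positivity
    · have key : ∀ᶠ N : ℕ in Filter.atTop,
          (m / (k + m)) * ((k + N) / N) = ‖a (N+1)‖ / ‖a N‖ := by
        filter_upwards [Filter.eventually_ge_atTop 1] with N hN
        have hf := nbPmf_pos hk hm N
        have hN0 : (0:ℝ) < (N:ℝ) := by exact_mod_cast hN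
        have haN : 0 < a N := by simp only [ha]; positivity
        have hrec := nbPmf_succ hk hm N
        rw [Real.norm_eq_abs, Real.norm_eq_abs, abs_of_pos haN, abs_of_pos]
        · simp only [ha, hrec]
          push_cast
          field_simp
        · simp only [ha, hrec]
          push_cast
          positivity
      refine Filter.Tendsto.congr' key ?_
      have h1 : Filter.Tendsto (fun N : ℕ => (k + N) / N) Filter.atTop (nhds 1) := by
        have h2 : Filter.Tendsto (fun N : ℕ => k / N + 1) Filter.atTop (nhds 1) := by
          have := (tendsto_natCast_atTop_atTop (R := ℝ)).const_div_atTop k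
          simpa using this.add tendsto_const_nhds
        refine h2.congr' ?_
        filter_upwards [Filter.eventually_ge_atTop 1] with N hN
        have hN0 : (N:ℝ) ≠ 0 := by positivity
        field_simp
      have := (tendsto_const_nhds (x := m / (k + m)) (f := Filter.atTop (α := ℕ))).mul h1
      simpa using this
  simpa using hsumm.tendsto_atTop_zero

lemma nb_hasSum {k m : ℝ} (hk : 0 < k) (hm : 0 < m) :
    HasSum (fun x : ℕ => |(x : ℝ) - m| * nbPmf k m x)
      (2 * (((k + m) / k) * (Nat.floor m + 1) * nbPmf k m (Nat.floor m + 1))) := by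
  set n := Nat.floor m with hn
  have hnm : (n : ℝ) ≤ m := Nat.floor_le hm.le
  have hmn : m < (n : ℝ) + 1 := Nat.lt_floor_add_one m
  set S := ((k + m) / k) * ((n:ℝ) + 1) * nbPmf k m (n + 1) with hS
  rw [hasSum_iff_tendsto_nat_of_nonneg
    (fun x => mul_nonneg (abs_nonneg _) (nbPmf_pos hk hm x).le)]
  have key : ∀ N : ℕ, n + 1 ≤ N →
      ∑ x ∈ Finset.range N, |(x : ℝ) - m| * nbPmf k m x
        = 2 * S - ((k + m) / k) * N * nbPmf k m N := by
    intro N hN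
    have step1 : ∀ x : ℕ, |(x:ℝ) - m| * nbPmf k m x
        = 2 * (max (m - x) 0 * nbPmf k m x) - (m - x) * nbPmf k m x := by
      intro x
      rcases le_total ((x:ℝ)) m with h | h
      · rw [abs_of_nonpos (by linarith), max_eq_left (by linarith)]; ring
      · rw [abs_of_nonneg (by linarith), max_eq_right (by linarith)]; ring
    simp only [step1]
    rw [Finset.sum_sub_distrib, ← Finset.mul_sum, nb_partial_sum hk hm N]
    have step2 : ∑ x ∈ Finset.range N, max (m - x) 0 * nbPmf k m x
        = ∑ x ∈ Finset.range (n + 1), (m - x) * nbPmf k m x := by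
      rw [← Finset.sum_subset (Finset.range_subset_range.2 hN)]
      · apply Finset.sum_congr rfl
        intro x hx
        have hx' : x ≤ n := Nat.lt_succ_iff.1 (Finset.mem_range.1 hx)
        have : (x:ℝ) ≤ m := le_trans (by exact_mod_cast hx') hnm
        rw [max_eq_left (by linarith)]
      · intro x _ hx
        have hx' : n + 1 ≤ x := Nat.not_lt.1 (fun h => hx (Finset.mem_range.2 h))
        have : m < (x:ℝ) := lt_of_lt_of_le hmn (by exact_mod_cast hx')
        rw [max_eq_right (by linarith), zero_mul]
    rw [step2, nb_partial_sum hk hm (n + 1), hS]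
    push_cast
    ring
  have := ((tendsto_const_nhds (x := 2 * S) (f := Filter.atTop (α := ℕ))).sub
    (nb_tail_tendsto hk hm))
  rw [sub_zero] at this
  refine Filter.Tendsto.congr' ?_ this
  filter_upwards [Filter.eventually_ge_atTop (n + 1)] with N hN
  rw [key N hN]



noncomputable def hAux (m : ℝ) (n : ℕ) (k : ℝ) : ℝ :=
  (∑ i ∈ Finset.range n, Real.log (k + i + 1)) + k * Real.log k
    - (k + n) * Real.log (k + m)

lemma Gamma_k_add_nat {k : ℝ} (hk : 0 < k) (j : ℕ) :
    Real.Gamma (k + j) = (∏ i ∈ Finset.range j, (k + i)) * Real.Gamma k := by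
  induction j with
  | zero => simp
  | succ j ih =>
    have h : k + ((j + 1 : ℕ) : ℝ) = (k + j) + 1 := by push_cast; ring
    rw [h, Real.Gamma_add_one (by positivity), ih, Finset.prod_range_succ]
    push_cast; ring

lemma hAux_hasDerivAt {m : ℝ} (hm : 0 < m) (n : ℕ) {k : ℝ} (hk : 0 < k) :
    HasDerivAt (hAux m n)
      ((∑ i ∈ Finset.range n, 1 / (k + i + 1)) + (Real.log k + 1)
        - (Real.log (k + m) + (k + n) / (k + m))) k := by
  have h1 : HasDerivAt (fun k : ℝ => ∑ i ∈ Finset.range n, Real.log (k + i + 1))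
      (∑ i ∈ Finset.range n, 1 / (k + i + 1)) k := by
    apply HasDerivAt.fun_sum
    intro i _
    have hpos : k + i + 1 ≠ 0 := by positivity
    have := (((hasDerivAt_id k).add_const ((i : ℝ) + 1)).log (by
      simpa [add_assoc] using hpos))
    simpa [add_assoc] using this
  have h2 : HasDerivAt (fun k : ℝ => k * Real.log k) (Real.log k + 1) k :=
    Real.hasDerivAt_mul_log hk.ne'
  have h3 : HasDerivAt (fun k : ℝ => (k + n) * Real.log (k + m))
      (Real.log (k + m) + (k + n) / (k + m)) k := by
    have hkm : k + m ≠ 0 := by positivity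
    have hl : HasDerivAt (fun k : ℝ => Real.log (k + m)) (1 / (k + m)) k := by
      simpa using ((hasDerivAt_id k).add_const m).log hkm
    have := ((hasDerivAt_id k).add_const (n : ℝ)).fun_mul hl
    refine this.congr_deriv ?_
    simp only [id]
    ring
  exact (h1.add h2).sub h3

lemma sum_inv_le_log {k : ℝ} (hk : 0 < k) (n : ℕ) :
    ∑ i ∈ Finset.range n, 1 / (k + i + 1) ≤ Real.log (k + n) - Real.log k := by
  induction n with
  | zero => simp
  | succ n ih =>
    rw [Finset.sum_range_succ]
    have h1 : (0:ℝ) < k + n := by positivity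
    have h2 : (0:ℝ) < k + n + 1 := by positivity
    have key : 1 / (k + n + 1) ≤ Real.log (k + n + 1) - Real.log (k + n) := by
      have := Real.log_le_sub_one_of_pos (div_pos h1 h2)
      rw [Real.log_div h1.ne' h2.ne'] at this
      have heq : (k + n) / (k + n + 1) - 1 = -(1 / (k + n + 1)) := by
        field_simp
        ring
      linarith [heq ▸ this]
    push_cast
    have hcast : k + ((n:ℝ) + 1) = k + n + 1 := by ring
    rw [hcast]
    linarith

lemma hAux_deriv_nonpos {m : ℝ} (hm : 0 < m) {n : ℕ} (hn : (n : ℝ) ≤ m)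
    {k : ℝ} (hk : 0 < k) :
    (∑ i ∈ Finset.range n, 1 / (k + i + 1)) + (Real.log k + 1)
      - (Real.log (k + m) + (k + n) / (k + m)) ≤ 0 := by
  have h1 := sum_inv_le_log hk n
  have hkn : (0:ℝ) < k + n := by positivity
  have hkm : (0:ℝ) < k + m := by positivity
  have h2 : Real.log (k + n) - Real.log (k + m) ≤ (k + n) / (k + m) - 1 := by
    have := Real.log_le_sub_one_of_pos (div_pos hkn hkm)
    rw [Real.log_div hkn.ne' hkm.ne'] at this
    linarith
  linarith

lemma hAux_anti {m : ℝ} (hm : 0 < m) {n : ℕ} (hn : (n : ℝ) ≤ m)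
    {k₁ k₂ : ℝ} (hk₁ : 0 < k₁) (hk : k₁ < k₂) :
    hAux m n k₂ ≤ hAux m n k₁ := by
  have hanti : AntitoneOn (hAux m n) (Set.Ici k₁) := by
    apply antitoneOn_of_deriv_nonpos (convex_Ici k₁)
    · intro x hx
      exact (hAux_hasDerivAt hm n (lt_of_lt_of_le hk₁ hx)).continuousAt.continuousWithinAt
    · intro x hx
      rw [interior_Ici] at hx
      exact ((hAux_hasDerivAt hm n (lt_trans hk₁ hx)).differentiableAt.differentiableWithinAt)
    · intro x hx
      rw [interior_Ici] at hx
      have hx0 : 0 < x := lt_trans hk₁ hx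
      rw [(hAux_hasDerivAt hm n hx0).deriv]
      exact hAux_deriv_nonpos hm hn hx0
  exact hanti (Set.self_mem_Ici) (Set.mem_Ici.2 hk.le) hk.le

lemma nb_exp_form {k m : ℝ} (hk : 0 < k) (hm : 0 < m) (n : ℕ) :
    ((k + m) / k) * nbPmf k m (n + 1)
      = (m ^ (n + 1) / (Nat.factorial (n + 1) : ℝ)) * Real.exp (hAux m n k) := by
  have hkm : (0:ℝ) < k + m := by positivity
  have hΓ : 0 < Real.Gamma k := Real.Gamma_pos_of_pos hk
  have hfac : (0:ℝ) < (Nat.factorial (n + 1) : ℝ) := by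
    exact_mod_cast Nat.factorial_pos (n + 1)
  set P := ∏ i ∈ Finset.range n, (k + i + 1) with hP
  have hPpos : 0 < P := Finset.prod_pos fun i _ => by positivity
  have hprod : ∏ i ∈ Finset.range (n + 1), (k + (i:ℝ)) = P * k := by
    rw [Finset.prod_range_succ']
    simp only [Nat.cast_zero, add_zero, hP]
    congr 1
    apply Finset.prod_congr rfl
    intro i _
    push_cast
    ring
  have hexp : Real.exp (hAux m n k)
      = P * (k ^ (k : ℝ)) / ((k + m) ^ (k + (n:ℝ))) := by
    unfold hAux
    rw [sub_eq_add_neg, Real.exp_add, Real.exp_add, Real.exp_neg, Real.exp_sum]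
    have e1 : ∀ i ∈ Finset.range n, Real.exp (Real.log (k + i + 1)) = k + i + 1 :=
      fun i _ => Real.exp_log (by positivity)
    rw [Finset.prod_congr rfl e1, Real.rpow_def_of_pos hk,
      Real.rpow_def_of_pos hkm, mul_comm (Real.log k) k,
      mul_comm (Real.log (k + m)) (k + (n:ℝ))]
    field_simp
    exact hP.symm
  have hrp : (k + m) ^ (k + (n:ℝ))
      = (k + m) ^ (k : ℝ) * (k + m) ^ (n + 1 : ℕ) / (k + m) := by
    rw [← Real.rpow_natCast (k + m) (n + 1), ← Real.rpow_add hkm]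
    have h9 : k + (n:ℝ) = (k + ((n + 1 : ℕ) : ℝ)) - 1 := by push_cast; ring
    rw [h9, Real.rpow_sub hkm, Real.rpow_one]
  unfold nbPmf
  have hg : k + ((n + 1 : ℕ) : ℝ) = k + (n + 1 : ℕ) := by norm_num
  rw [Gamma_k_add_nat hk (n + 1), hprod, Real.div_rpow hk.le hkm.le, div_pow,
    hexp, hrp]
  have h1 : (k + m) ^ (k:ℝ) ≠ 0 := (Real.rpow_pos_of_pos hkm _).ne'
  have h2 : ((k + m):ℝ) ^ (n + 1 : ℕ) ≠ 0 := by positivity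
  have h3 : k ^ (k:ℝ) ≠ 0 := (Real.rpow_pos_of_pos hk _).ne'
  field_simp

/-- The Hoover index of the negative binomial distribution is decreasing
in `k`. -/
theorem nb_hoover_decreasing_in_k (m k₁ k₂ : ℝ) (hm : 0 < m)
    (hk₁ : 0 < k₁) (hk : k₁ < k₂) :
    (1 / (2 * m)) * ∑' x : ℕ, |(x : ℝ) - m| * nbPmf k₂ m x ≤
      (1 / (2 * m)) * ∑' x : ℕ, |(x : ℝ) - m| * nbPmf k₁ m x := by
  have hk₂ : 0 < k₂ := hk₁.trans hk
  rw [(nb_hasSum hk₁ hm).tsum_eq, (nb_hasSum hk₂ hm).tsum_eq]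
  set n := Nat.floor m with hn
  have key : ∀ k : ℝ, 0 < k →
      ((k + m) / k) * ((n:ℝ) + 1) * nbPmf k m (n + 1)
        = ((n:ℝ) + 1) * ((m ^ (n + 1) / (Nat.factorial (n + 1) : ℝ))
            * Real.exp (hAux m n k)) := by
    intro k hk0
    rw [← nb_exp_form hk0 hm n]
    ring
  rw [key k₁ hk₁, key k₂ hk₂]
  have hmono : Real.exp (hAux m n k₂) ≤ Real.exp (hAux m n k₁) :=
    Real.exp_le_exp.2 (hAux_anti hm (Nat.floor_le hm.le) hk₁ hk)
  have hfac : (0:ℝ) < (Nat.factorial (n + 1) : ℝ) := by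
    exact_mod_cast Nat.factorial_pos (n + 1)
  gcongr
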